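/- arXiv:2211.09289 — 2 statements merged into one kernel-verified Lean document; each statement's English description precedes it below -/
import Mathlib

section
/- Let w be a 2D-weight, let p ≥ 0 be a real number, and let F : Γ → ℂ. Then ∑_{σ ∈ Γ} λ_σ^{-2(p+1)}·θ_w(σ)²·|F(σ)|² ≤ 4·α_w²·∑_{σ ∈ Γ} λ_σ^{-2p}·|F(σ)|² (an inequality of sums valued in [0,∞]). Consequently, if Φ is a generalized functional with Fock transform F and ‖Φ‖_{-p} < ∞, then the 2D-GWN operator satisfies ‖K_w Φ‖_{-(p+1)} ≤ 2·α_w·‖Φ‖_{-p}. -/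
noncomputable def lam (σ : Finset ℕ) : ℝ := ∏ k ∈ σ, ((k : ℝ) + 1)

noncomputable def theta (w : ℕ → ℕ → ℝ) (σ : Finset ℕ) : ℝ :=
  (∑ j ∈ σ, w j j) + ∑ k ∈ σ, ∑' j : ℕ, (if j ∈ σ then 0 else w j k)

/-!
Both parts of `theta w σ` are sums over `σ` of terms bounded by a column sum of `w`, so
`θ_w(σ) ≤ 2 α_w |σ|`. Since `σ` consists of distinct naturals, `|σ| ≤ max σ + 1 ≤ λ_σ`, hence
`θ_w(σ) ≤ 2 α_w λ_σ` and `λ_σ^{-2(p+1)} θ_w(σ)² ≤ 4 α_w² λ_σ^{-2p}` termwise; summing gives both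
estimates.
-/

open Finset

lemma lam_pos (σ : Finset ℕ) : 0 < lam σ :=
  prod_pos fun k _ => by positivity

lemma natCast_card_le_lam (σ : Finset ℕ) : (#σ : ℝ) ≤ lam σ := by
  induction σ using Finset.induction_on_max with
  | empty => simp [lam]
  | insert a s hlt _ =>
    have hcard : #s ≤ a := by
      simpa using card_le_card fun x hx => mem_range.2 (hlt x hx)
    have hlam : 1 ≤ lam s := one_le_prod fun k _ => by simp
    rw [card_insert_of_notMem fun ha => (hlt a ha).false, lam, prod_insert
      fun ha => (hlt a ha).false, ← lam]
    push_cast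
    nlinarith [(Nat.cast_le (α := ℝ)).2 hcard, (Nat.cast_nonneg a : (0 : ℝ) ≤ a)]

section theta

variable {w : ℕ → ℕ → ℝ}

lemma tsum_ite_mem_le_tsum (hw0 : ∀ j k, 0 ≤ w j k) (hwsum : ∀ k, Summable fun j => w j k)
    (σ : Finset ℕ) (k : ℕ) : ∑' j, (if j ∈ σ then 0 else w j k) ≤ ∑' j, w j k := by
  have hle : ∀ j, (if j ∈ σ then 0 else w j k) ≤ w j k := fun j => by
    split_ifs
    exacts [hw0 j k, le_rfl]
  have hnonneg : ∀ j, 0 ≤ (if j ∈ σ then 0 else w j k) := fun j => by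
    split_ifs
    exacts [le_rfl, hw0 j k]
  exact (Summable.of_nonneg_of_le hnonneg hle (hwsum k)).tsum_le_tsum hle (hwsum k)

lemma theta_nonneg (hw0 : ∀ j k, 0 ≤ w j k) (σ : Finset ℕ) : 0 ≤ theta w σ :=
  add_nonneg (sum_nonneg fun j _ => hw0 j j) <| sum_nonneg fun k _ => tsum_nonneg fun j => by
    split_ifs
    exacts [le_rfl, hw0 j k]

lemma theta_le_two_mul_card_mul (hw0 : ∀ j k, 0 ≤ w j k) (hwsum : ∀ k, Summable fun j => w j k)
    {α : ℝ} (hcol : ∀ k, ∑' j, w j k ≤ α) (σ : Finset ℕ) : theta w σ ≤ 2 * #σ * α := by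
  have hdiag : ∑ j ∈ σ, w j j ≤ #σ • α := sum_le_card_nsmul _ _ _ fun j _ =>
    ((hwsum j).le_tsum j fun i _ => hw0 i j).trans (hcol j)
  have hoff : ∑ k ∈ σ, ∑' j, (if j ∈ σ then 0 else w j k) ≤ #σ • α :=
    sum_le_card_nsmul _ _ _ fun k _ => (tsum_ite_mem_le_tsum hw0 hwsum σ k).trans (hcol k)
  rw [nsmul_eq_mul] at hdiag hoff
  unfold theta
  linarith

lemma theta_le_two_mul_mul_lam (hw0 : ∀ j k, 0 ≤ w j k) (hwsum : ∀ k, Summable fun j => w j k)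
    {α : ℝ} (hcol : ∀ k, ∑' j, w j k ≤ α) (σ : Finset ℕ) : theta w σ ≤ 2 * α * lam σ := by
  have hα : 0 ≤ α := (tsum_nonneg fun j => hw0 j 0).trans (hcol 0)
  calc theta w σ ≤ 2 * α * #σ := by linarith [theta_le_two_mul_card_mul hw0 hwsum hcol σ]
    _ ≤ 2 * α * lam σ := by gcongr; exact natCast_card_le_lam σ

end theta

lemma rpow_neg_two_mul_add_one_mul_sq_le {L t c : ℝ} (p : ℝ) (hL : 0 < L) (ht : 0 ≤ t)
    (htc : t ≤ c * L) : L ^ (-(2 * (p + 1))) * t ^ 2 ≤ c ^ 2 * L ^ (-(2 * p)) := by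
  have hsplit : L ^ (-(2 * (p + 1))) = L ^ (-(2 * p)) * (L ^ 2)⁻¹ := by
    rw [show -(2 * (p + 1)) = -(2 * p) + -2 by ring, Real.rpow_add hL, Real.rpow_neg hL.le 2,
      Real.rpow_two]
  calc L ^ (-(2 * (p + 1))) * t ^ 2 ≤ L ^ (-(2 * p)) * (L ^ 2)⁻¹ * (c * L) ^ 2 := by
        rw [hsplit]; gcongr
    _ = c ^ 2 * L ^ (-(2 * p)) := by field_simp

section weightedSums

variable {ι : Type*} {f g : ι → ℝ} {c : ℝ}

lemma tsum_ofReal_le_ofReal_mul_tsum_ofReal (hc : 0 ≤ c) (hfg : ∀ i, f i ≤ c * g i) :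
    ∑' i, ENNReal.ofReal (f i) ≤ ENNReal.ofReal c * ∑' i, ENNReal.ofReal (g i) := by
  rw [← ENNReal.tsum_mul_left]
  refine ENNReal.tsum_le_tsum fun i => ?_
  rw [← ENNReal.ofReal_mul hc]
  exact ENNReal.ofReal_le_ofReal (hfg i)

lemma sqrt_tsum_le_mul_sqrt_tsum (hc : 0 ≤ c) (hf : ∀ i, 0 ≤ f i)
    (hfg : ∀ i, f i ≤ c ^ 2 * g i) (hg : Summable g) :
    √(∑' i, f i) ≤ c * √(∑' i, g i) := by
  have hsum : ∑' i, f i ≤ c ^ 2 * ∑' i, g i := by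
    rw [← tsum_mul_left]
    exact (Summable.of_nonneg_of_le hf hfg (hg.mul_left _)).tsum_le_tsum hfg (hg.mul_left _)
  calc √(∑' i, f i) ≤ √(c ^ 2 * ∑' i, g i) := Real.sqrt_le_sqrt hsum
    _ = c * √(∑' i, g i) := by rw [Real.sqrt_mul (sq_nonneg c), Real.sqrt_sq hc]

end weightedSums

theorem stmt4_general (w : ℕ → ℕ → ℝ) (hw0 : ∀ j k, 0 ≤ w j k)
    (hwsum : ∀ k, Summable fun j => w j k)
    (hwbdd : BddAbove (Set.range fun k => ∑' j, w j k))
    (α : ℝ) (hα : α = ⨆ k, ∑' j, w j k)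
    (p : ℝ) (F : Finset ℕ → ℂ) :
    (∑' σ : Finset ℕ, ENNReal.ofReal (lam σ ^ (-(2*(p+1))) * (theta w σ)^2 * ‖F σ‖^2))
      ≤ ENNReal.ofReal (4 * α^2) *
        ∑' σ : Finset ℕ, ENNReal.ofReal (lam σ ^ (-(2*p)) * ‖F σ‖^2) ∧
    (Summable (fun σ : Finset ℕ => lam σ ^ (-(2*p)) * ‖F σ‖^2) →
      Summable (fun σ : Finset ℕ => lam σ ^ (-(2*(p+1))) * (theta w σ)^2 * ‖F σ‖^2) ∧
      Real.sqrt (∑' σ : Finset ℕ, lam σ ^ (-(2*(p+1))) * (theta w σ)^2 * ‖F σ‖^2)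
        ≤ 2 * α * Real.sqrt (∑' σ : Finset ℕ, lam σ ^ (-(2*p)) * ‖F σ‖^2)) := by
  have hcol : ∀ k, ∑' j, w j k ≤ α := fun k => hα ▸ le_ciSup hwbdd k
  have hα0 : 0 ≤ α := (tsum_nonneg fun j => hw0 j 0).trans (hcol 0)
  have hnonneg : ∀ σ, 0 ≤ lam σ ^ (-(2*(p+1))) * (theta w σ)^2 * ‖F σ‖^2 := fun σ => by
    have := (lam_pos σ).le
    positivity
  have key : ∀ σ, lam σ ^ (-(2*(p+1))) * (theta w σ)^2 * ‖F σ‖^2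
      ≤ (2 * α) ^ 2 * (lam σ ^ (-(2*p)) * ‖F σ‖^2) := fun σ => by
    have := mul_le_mul_of_nonneg_right (rpow_neg_two_mul_add_one_mul_sq_le p (lam_pos σ)
      (theta_nonneg hw0 σ) (theta_le_two_mul_mul_lam hw0 hwsum hcol σ)) (sq_nonneg ‖F σ‖)
    linarith
  refine ⟨?_, fun hg => ⟨.of_nonneg_of_le hnonneg key (hg.mul_left _),
    sqrt_tsum_le_mul_sqrt_tsum (by positivity) hnonneg key hg⟩⟩
  rw [show 4 * α ^ 2 = (2 * α) ^ 2 by ring]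
  exact tsum_ofReal_le_ofReal_mul_tsum_ofReal (by positivity) key

theorem stmt4 (w : ℕ → ℕ → ℝ) (hw0 : ∀ j k, 0 ≤ w j k)
    (hwsum : ∀ k, Summable fun j => w j k)
    (hwbdd : BddAbove (Set.range fun k => ∑' j, w j k))
    (α : ℝ) (hα : α = ⨆ k, ∑' j, w j k)
    (p : ℝ) (hp : 0 ≤ p) (F : Finset ℕ → ℂ) :
    (∑' σ : Finset ℕ, ENNReal.ofReal (lam σ ^ (-(2*(p+1))) * (theta w σ)^2 * ‖F σ‖^2))
      ≤ ENNReal.ofReal (4 * α^2) *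
        ∑' σ : Finset ℕ, ENNReal.ofReal (lam σ ^ (-(2*p)) * ‖F σ‖^2) ∧
    (Summable (fun σ : Finset ℕ => lam σ ^ (-(2*p)) * ‖F σ‖^2) →
      Summable (fun σ : Finset ℕ => lam σ ^ (-(2*(p+1))) * (theta w σ)^2 * ‖F σ‖^2) ∧
      Real.sqrt (∑' σ : Finset ℕ, lam σ ^ (-(2*(p+1))) * (theta w σ)^2 * ‖F σ‖^2)
        ≤ 2 * α * Real.sqrt (∑' σ : Finset ℕ, lam σ ^ (-(2*p)) * ‖F σ‖^2)) :=
  stmt4_general w hw0 hwsum hwbdd α hα p F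
end

section
/- Let w be a 2D-weight and k ∈ ℕ. Then in Fock-transform coordinates the commutation relation K_w ∘ a_k = a_k ∘ K_w + a_k ∘ N_{w(k,·)} + a_k ∘ N_{w(·,k)} − (2·w(k,k) + ∑_{j=0}^∞ w(j,k))·a_k holds: for every F : Γ → ℂ and every σ ∈ Γ, (K_w(a_k F))(σ) = (a_k(K_w F))(σ) + (a_k(N_{w(k,·)} F))(σ) + (a_k(N_{w(·,k)} F))(σ) − (2·w(k,k) + ∑_{j=0}^∞ w(j,k))·(a_k F)(σ). -/
noncomputable def ann (k : ℕ) (F : Finset ℕ → ℂ) : Finset ℕ → ℂ :=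
  fun σ => (1 - if k ∈ σ then 1 else 0) * F (insert k σ)

noncomputable def cre (k : ℕ) (F : Finset ℕ → ℂ) : Finset ℕ → ℂ :=
  fun σ => (if k ∈ σ then 1 else 0) * F (σ.erase k)

noncomputable def Nop (u : ℕ → ℝ) (F : Finset ℕ → ℂ) : Finset ℕ → ℂ :=
  fun σ => ((∑ m ∈ σ, u m : ℝ) : ℂ) * F σ

noncomputable def Kop (w : ℕ → ℕ → ℝ) (F : Finset ℕ → ℂ) : Finset ℕ → ℂ :=
  fun σ => ((theta w σ : ℝ) : ℂ) * F σ

theorem tsum_ite_mem_eq_tsum_sub_sum {α G : Type*} [DecidableEq α] [AddCommGroup G]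
    [TopologicalSpace G] [IsTopologicalAddGroup G] [T2Space G] {f : α → G} (hf : Summable f)
    (s : Finset α) : ∑' j, (if j ∈ s then 0 else f j) = ∑' j, f j - ∑ j ∈ s, f j := by
  refine HasSum.tsum_eq ?_
  convert hf.hasSum.sub (hasSum_sum_of_ne_finset_zero (f := fun j => if j ∈ s then f j else 0)
    (s := s) fun j hj => if_neg hj) using 1
  · ext j; split_ifs <;> simp
  · congr 1; exact Finset.sum_congr rfl fun j hj => (if_pos hj).symm

theorem theta_eq_of_summable {w : ℕ → ℕ → ℝ} (hw : ∀ k, Summable fun j => w j k) (σ : Finset ℕ) :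
    theta w σ = ∑ j ∈ σ, w j j + ∑ m ∈ σ, (∑' j, w j m - ∑ j ∈ σ, w j m) := by
  simp only [theta, tsum_ite_mem_eq_tsum_sub_sum (hw _)]

theorem theta_insert {w : ℕ → ℕ → ℝ} (hw : ∀ k, Summable fun j => w j k) {k : ℕ} {σ : Finset ℕ}
    (hk : k ∉ σ) :
    theta w σ = theta w (insert k σ) + ∑ m ∈ insert k σ, w k m + ∑ j ∈ insert k σ, w j k
      - (2 * w k k + ∑' j, w j k) := by
  simp only [theta_eq_of_summable hw, Finset.sum_insert hk, Finset.sum_sub_distrib,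
    Finset.sum_add_distrib]
  ring

theorem ann_apply_of_mem {k : ℕ} {σ : Finset ℕ} (hk : k ∈ σ) (F : Finset ℕ → ℂ) :
    ann k F σ = 0 := by
  simp [ann, hk]

theorem ann_apply_of_notMem {k : ℕ} {σ : Finset ℕ} (hk : k ∉ σ) (F : Finset ℕ → ℂ) :
    ann k F σ = F (insert k σ) := by
  simp [ann, hk]

theorem stmt16_general (w : ℕ → ℕ → ℝ)
    (hwsum : ∀ k, Summable fun j => w j k)
    (k : ℕ) (F : Finset ℕ → ℂ) (σ : Finset ℕ) :
    Kop w (ann k F) σ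
      = ann k (Kop w F) σ + ann k (Nop (fun n => w k n) F) σ
        + ann k (Nop (fun j => w j k) F) σ
        - ((2 * w k k + ∑' j, w j k : ℝ) : ℂ) * ann k F σ := by
  by_cases hk : k ∈ σ
  · simp only [Kop, ann_apply_of_mem hk]
    ring
  · simp only [Kop, Nop, ann_apply_of_notMem hk, theta_insert hwsum hk]
    push_cast
    ring

theorem stmt16 (w : ℕ → ℕ → ℝ) (hw0 : ∀ j k, 0 ≤ w j k)
    (hwsum : ∀ k, Summable fun j => w j k)
    (hwbdd : BddAbove (Set.range fun k => ∑' j, w j k))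
    (k : ℕ) (F : Finset ℕ → ℂ) (σ : Finset ℕ) :
    Kop w (ann k F) σ
      = ann k (Kop w F) σ + ann k (Nop (fun n => w k n) F) σ
        + ann k (Nop (fun j => w j k) F) σ
        - ((2 * w k k + ∑' j, w j k : ℝ) : ℂ) * ann k F σ :=
  stmt16_general w hwsum k F σ
end
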